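/- arXiv:2103.03848 — 4 statements merged into one kernel-verified Lean document; each statement's English description precedes it below -/
import Mathlib

section
/- For any square quaternionic matrix P, the determinant of its complex representation χ(P) is a nonnegative real number. -/
/-!
The map `q ↦ [[q₁, q₂], [-q̄₂, q̄₁]]` (with `q = q₁ + q₂ j`) is a ring embedding `ℍ → M₂(ℂ)` with
determinant `‖q‖²`, and `χ` is this embedding applied entrywise followed by flattening the block
matrix; hence `det ∘ χ` is multiplicative. Gaussian elimination over the division ring `ℍ`, using
only row operations of the form `1 + N` with `N * N = 0`, makes `P` upper triangular; these
operations do not change `det χ` since `χ N` is nilpotent. For upper triangular `P`, the matrix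
`χ P` is block triangular with the `2 × 2` blocks `χ (P k k)`, so `det χ P = ∏ ‖P k k‖² ≥ 0`.
-/

noncomputable section
open Matrix Polynomial

abbrev Hq := Quaternion ℝ

def toH (z : ℂ) : Hq := ⟨z.re, z.im, 0, 0⟩

def toC1 (q : Hq) : ℂ := ⟨q.re, q.imI⟩
def toC2 (q : Hq) : ℂ := ⟨q.imJ, q.imK⟩

def chi {m : ℕ} (P : Matrix (Fin m) (Fin m) Hq) :
    Matrix (Fin m ⊕ Fin m) (Fin m ⊕ Fin m) ℂ :=
  Matrix.fromBlocks (P.map toC1) (P.map toC2)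
    (-(P.map fun q => star (toC2 q))) (P.map fun q => star (toC1 q))

theorem Matrix.det_one_add_of_isNilpotent {n R : Type*} [Fintype n] [DecidableEq n]
    [CommRing R] [IsDomain R] {N : Matrix n n R} (hN : IsNilpotent N) : (1 + N).det = 1 := by
  have h := sub_eq_zero.1 (isNilpotent_charpoly_sub_pow_of_isNilpotent hN.neg).eq_zero
  simpa [h] using (eval_charpoly (-N) 1).symm

section SquareZeroUnipotents

variable {n D : Type*} [Ring D] [Fintype n] [DecidableEq n]

variable (n D) in
def squareZeroUnipotents : Submonoid (Matrix n n D) :=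
  Submonoid.closure {E | (E - 1) * (E - 1) = 0}

theorem one_add_vecMulVec_mem_squareZeroUnipotents {v w : n → D} (h : w ⬝ᵥ v = 0) :
    1 + vecMulVec v w ∈ squareZeroUnipotents n D :=
  Submonoid.subset_closure (by simp [vecMulVec_mul_vecMulVec, h])

theorem one_add_vecMulVec_mul_apply (v w : n → D) (M : Matrix n n D) (i j : n) :
    ((1 + vecMulVec v w) * M) i j = M i j + v i * (w ᵥ* M) j := by
  simp [Matrix.add_mul, vecMulVec_mul, vecMulVec_apply]

theorem det_map_eq_one_of_mem_squareZeroUnipotents {K p : Type*} [CommRing K] [IsDomain K]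
    [Fintype p] [DecidableEq p] (f : Matrix n n D →+* Matrix p p K) {E : Matrix n n D}
    (hE : E ∈ squareZeroUnipotents n D) : (f E).det = 1 := by
  induction hE using Submonoid.closure_induction with
  | mem E hE =>
    rw [← add_sub_cancel 1 E, map_add, map_one]
    exact det_one_add_of_isNilpotent ⟨2, by rw [sq, ← map_mul, hE, map_zero]⟩
  | one => rw [map_one, det_one]
  | mul E F _ _ hE hF => rw [map_mul, det_mul, hE, hF, mul_one]

end SquareZeroUnipotents

section Elimination

variable {n D : Type*} [DivisionRing D] [Fintype n] [LinearOrder n]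

def UpperTriangularOn (M : Matrix n n D) (s : Finset n) : Prop :=
  ∀ i, ∀ j ∈ s, j < i → M i j = 0

theorem exists_upperTriangularOn_insert_of_pivot_ne_zero {M : Matrix n n D} {s : Finset n}
    {c : n} (hs : ∀ j ∈ s, j < c) (hM : UpperTriangularOn M s) (hc : M c c ≠ 0) :
    ∃ E ∈ squareZeroUnipotents n D, UpperTriangularOn (E * M) (insert c s) := by
  let v : n → D := fun i => if c < i then -(M i c * (M c c)⁻¹) else 0
  refine ⟨1 + vecMulVec v (Pi.single c 1), one_add_vecMulVec_mem_squareZeroUnipotents ?_, ?_⟩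
  · simp [v]
  intro i j hj hji
  rw [one_add_vecMulVec_mul_apply]
  rcases Finset.mem_insert.1 hj with rfl | hj
  · simp [v, hji, hc]
  · simp [v, hM i j hj hji, hM c j hj (hs j hj)]

theorem exists_upperTriangularOn_pivot_ne_zero_of_pivot_eq_zero {M : Matrix n n D} {s : Finset n}
    {c p : n} (hs : ∀ j ∈ s, j < c) (hM : UpperTriangularOn M s) (hcc : M c c = 0) (hcp : c < p)
    (hp : M p c ≠ 0) :
    ∃ E ∈ squareZeroUnipotents n D, UpperTriangularOn (E * M) s ∧ (E * M) c c ≠ 0 := by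
  refine ⟨1 + vecMulVec (Pi.single c 1) (Pi.single p 1),
    one_add_vecMulVec_mem_squareZeroUnipotents (by simp [hcp.ne']), ?_, ?_⟩
  · intro i j hj hji
    rw [one_add_vecMulVec_mul_apply]
    simp [hM i j hj hji, hM p j hj ((hs j hj).trans hcp)]
  · simpa [one_add_vecMulVec_mul_apply, hcc] using hp

theorem exists_upperTriangularOn_insert {M : Matrix n n D} {s : Finset n} {c : n}
    (hs : ∀ j ∈ s, j < c) (hM : UpperTriangularOn M s) :
    ∃ E ∈ squareZeroUnipotents n D, UpperTriangularOn (E * M) (insert c s) := by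
  by_cases hcol : ∀ i, c < i → M i c = 0
  · refine ⟨1, one_mem _, fun i j hj hji => ?_⟩
    rcases Finset.mem_insert.1 hj with rfl | hj
    · simpa using hcol i hji
    · simpa using hM i j hj hji
  push Not at hcol
  obtain ⟨p, hcp, hp⟩ := hcol
  by_cases hcc : M c c = 0
  · obtain ⟨E, hE, hEM, hpiv⟩ :=
      exists_upperTriangularOn_pivot_ne_zero_of_pivot_eq_zero hs hM hcc hcp hp
    obtain ⟨F, hF, hFEM⟩ := exists_upperTriangularOn_insert_of_pivot_ne_zero hs hEM hpiv
    exact ⟨F * E, mul_mem hF hE, by rwa [Matrix.mul_assoc]⟩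
  · exact exists_upperTriangularOn_insert_of_pivot_ne_zero hs hM hcc

theorem exists_mem_squareZeroUnipotents_mul_blockTriangular (P : Matrix n n D) :
    ∃ E ∈ squareZeroUnipotents n D, (E * P).BlockTriangular id := by
  suffices ∀ s : Finset n, ∃ E ∈ squareZeroUnipotents n D, UpperTriangularOn (E * P) s by
    obtain ⟨E, hE, h⟩ := this Finset.univ
    exact ⟨E, hE, fun i j hji => h i j (Finset.mem_univ j) hji⟩
  intro s
  induction s using Finset.induction_on_max with
  | empty => exact ⟨1, one_mem _, by simp [UpperTriangularOn]⟩
  | insert c s hs ih =>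
    obtain ⟨E, hE, hEP⟩ := ih
    obtain ⟨F, hF, hFEP⟩ := exists_upperTriangularOn_insert hs hEP
    exact ⟨F * E, mul_mem hF hE, by rwa [Matrix.mul_assoc]⟩

end Elimination

open Quaternion

def quaternionMatrixHom : Hq →+* Matrix (Fin 2) (Fin 2) ℂ where
  toFun q := !![toC1 q, toC2 q; -star (toC2 q), star (toC1 q)]
  map_one' := by ext i j; fin_cases i <;> fin_cases j <;> simp [toC1, toC2, Complex.ext_iff]
  map_zero' := by ext i j; fin_cases i <;> fin_cases j <;> simp [toC1, toC2, Complex.ext_iff]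
  map_add' p q := by
    ext i j; fin_cases i <;> fin_cases j <;> simp [toC1, toC2, Complex.ext_iff, add_comm]
  map_mul' p q := by
    ext i j; fin_cases i <;> fin_cases j <;>
      simp [toC1, toC2, Complex.ext_iff, Matrix.mul_apply, Fin.sum_univ_two] <;>
      constructor <;> ring

theorem det_quaternionMatrixHom (q : Hq) :
    (quaternionMatrixHom q).det = ((normSq q : ℝ) : ℂ) := by
  simp [quaternionMatrixHom, Matrix.det_fin_two_of, normSq_def', toC1, toC2, Complex.ext_iff, sq]
  constructor <;> ring

def sumEquivProdFinTwo (m : ℕ) : Fin m ⊕ Fin m ≃ Fin m × Fin 2 :=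
  (Equiv.boolProdEquivSum (Fin m)).symm.trans <|
    (finTwoEquiv.symm.prodCongr (Equiv.refl _)).trans (Equiv.prodComm _ _)

def chiRingHom (m : ℕ) :
    Matrix (Fin m) (Fin m) Hq →+* Matrix (Fin m ⊕ Fin m) (Fin m ⊕ Fin m) ℂ :=
  ((reindexRingEquiv ℂ (sumEquivProdFinTwo m).symm).toRingHom.comp
    (compRingEquiv (Fin m) (Fin 2) ℂ).toRingHom).comp quaternionMatrixHom.mapMatrix

theorem chiRingHom_apply {m : ℕ} (P : Matrix (Fin m) (Fin m) Hq) : chiRingHom m P = chi P := by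
  ext (i | i) (j | j) <;> rfl

theorem det_chi_eq_det_comp {m : ℕ} (P : Matrix (Fin m) (Fin m) Hq) :
    (chi P).det = (compRingEquiv (Fin m) (Fin 2) ℂ (P.map quaternionMatrixHom)).det := by
  rw [← chiRingHom_apply]
  exact det_reindex_self (sumEquivProdFinTwo m).symm
    (compRingEquiv (Fin m) (Fin 2) ℂ (P.map quaternionMatrixHom))

theorem det_chi_of_blockTriangular {m : ℕ} {P : Matrix (Fin m) (Fin m) Hq}
    (hP : P.BlockTriangular id) : (chi P).det = ∏ k, ((normSq (P k k) : ℝ) : ℂ) := by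
  have hT : (compRingEquiv (Fin m) (Fin 2) ℂ (P.map quaternionMatrixHom)).BlockTriangular
      Prod.fst := fun x y h => by simp [compRingEquiv_apply, hP h]
  rw [det_chi_eq_det_comp, hT.det_fintype]
  refine Finset.prod_congr rfl fun k _ => ?_
  let e : Fin 2 ≃ {x : Fin m × Fin 2 // x.1 = k} :=
    ⟨fun a => ⟨(k, a), rfl⟩, fun x => x.1.2, fun _ => rfl, by rintro ⟨⟨_, _⟩, rfl⟩; rfl⟩
  rw [← det_quaternionMatrixHom, ← det_submatrix_equiv_self e]
  rfl

/-- The determinant of the complex representation of a quaternionic matrix is a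
nonnegative real number. -/
theorem chi_det_nonneg {m : ℕ} (P : Matrix (Fin m) (Fin m) Hq) :
    ∃ r : ℝ, 0 ≤ r ∧ (chi P).det = r := by
  obtain ⟨E, hE, hEP⟩ := exists_mem_squareZeroUnipotents_mul_blockTriangular P
  refine ⟨∏ k, normSq ((E * P) k k), Finset.prod_nonneg fun k _ => normSq_nonneg, ?_⟩
  calc (chi P).det = (chiRingHom m E).det * (chi P).det := by
        rw [det_map_eq_one_of_mem_squareZeroUnipotents (chiRingHom m) hE, one_mul]
    _ = (chi (E * P)).det := by rw [← chiRingHom_apply, ← chiRingHom_apply, map_mul, det_mul]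
    _ = _ := by rw [det_chi_of_blockTriangular hEP, Complex.ofReal_prod]
end
end

section
/- For a quaternionic square matrix P, a complex number λ is a right eigenvalue of P if and only if λ is an eigenvalue of the complex representation χ(P). -/
noncomputable section
open Matrix Polynomial

/-
Writing a column as `X = X₁ + X₂ j` with `X₁, X₂` complex, the map `X ↦ (X₁, -X̄₂)` is an additive
bijection onto `ℂ^{2m}` which turns `P *ᵥ X` into `χ(P) *ᵥ (X₁, -X̄₂)` and, since `j z = z̄ j`,
turns right multiplication by `λ ∈ ℂ` into scalar multiplication by `λ`. It therefore maps the
right eigenvectors of `P` for `λ` exactly onto the eigenvectors of `χ(P)` for `λ`.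
-/

-- Every quaternion is `q = toC1 q + toC2 q * j`, with `ℂ` embedded as `ℝ + ℝi`.

lemma toC_ext {p q : Hq} (h1 : toC1 p = toC1 q) (h2 : toC2 p = toC2 q) : p = q := by
  simp only [toC1, toC2, Complex.ext_iff] at h1 h2
  ext
  exacts [h1.1, h1.2, h2.1, h2.2]

lemma toC1_add (p q : Hq) : toC1 (p + q) = toC1 p + toC1 q := by
  simp [toC1, Complex.ext_iff]

lemma toC2_add (p q : Hq) : toC2 (p + q) = toC2 p + toC2 q := by
  simp [toC2, Complex.ext_iff]

lemma toC1_sum {ι : Type*} (s : Finset ι) (f : ι → Hq) :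
    toC1 (∑ k ∈ s, f k) = ∑ k ∈ s, toC1 (f k) :=
  map_sum (AddMonoidHom.mk' toC1 toC1_add) f s

lemma toC2_sum {ι : Type*} (s : Finset ι) (f : ι → Hq) :
    toC2 (∑ k ∈ s, f k) = ∑ k ∈ s, toC2 (f k) :=
  map_sum (AddMonoidHom.mk' toC2 toC2_add) f s

lemma toC1_mul (p q : Hq) : toC1 (p * q) = toC1 p * toC1 q - toC2 p * star (toC2 q) := by
  apply Complex.ext <;> simp [toC1, toC2] <;> ring

lemma toC2_mul (p q : Hq) : toC2 (p * q) = toC1 p * toC2 q + toC2 p * star (toC1 q) := by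
  apply Complex.ext <;> simp [toC1, toC2] <;> ring

@[simp] lemma toC1_toH (z : ℂ) : toC1 (toH z) = z := by simp [toC1, toH]

@[simp] lemma toC2_toH (z : ℂ) : toC2 (toH z) = 0 := by simp [toC2, toH, Complex.ext_iff]

def ofC (z w : ℂ) : Hq := ⟨z.re, z.im, w.re, w.im⟩

@[simp] lemma toC1_ofC (z w : ℂ) : toC1 (ofC z w) = z := rfl

@[simp] lemma toC2_ofC (z w : ℂ) : toC2 (ofC z w) = w := rfl

section
variable {n : Type*}

/-- The column `X = X₁ + X₂ j` corresponds to the complex column `(X₁, -X̄₂)`, the first column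
of `χ(X)`. -/
def chiVec : (n → Hq) ≃+ (n ⊕ n → ℂ) where
  toFun X := Sum.elim (fun i => toC1 (X i)) (fun i => -star (toC2 (X i)))
  invFun v i := ofC (v (.inl i)) (-star (v (.inr i)))
  left_inv X := funext fun i => toC_ext (by simp) (by simp)
  right_inv v := funext fun | .inl i => by simp | .inr i => by simp
  map_add' X Y := funext fun | .inl i => by simp [toC1_add] | .inr i => by simp [toC2_add]; ring

@[simp] lemma chiVec_inl (X : n → Hq) (i : n) : chiVec X (.inl i) = toC1 (X i) := rfl

@[simp] lemma chiVec_inr (X : n → Hq) (i : n) : chiVec X (.inr i) = -star (toC2 (X i)) := rfl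

lemma chiVec_mul_toH (X : n → Hq) (z : ℂ) : chiVec (fun i => X i * toH z) = z • chiVec X := by
  funext i
  cases i <;> simp [toC1_mul, toC2_mul, mul_comm]

end

lemma chi_mulVec_chiVec {m : ℕ} (P : Matrix (Fin m) (Fin m) Hq) (X : Fin m → Hq) :
    chi P *ᵥ chiVec X = chiVec (P *ᵥ X) := by
  funext i
  cases i with
  | inl i =>
    simp only [chi, mulVec, dotProduct, Fintype.sum_sum_type, chiVec_inl, chiVec_inr, toC1_sum,
      toC1_mul, fromBlocks_apply₁₁, fromBlocks_apply₁₂, map_apply, Finset.sum_sub_distrib]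
    simp [sub_eq_add_neg]
  | inr i =>
    simp only [chi, mulVec, dotProduct, Fintype.sum_sum_type, chiVec_inl, chiVec_inr, toC2_sum,
      toC2_mul, fromBlocks_apply₂₁, fromBlocks_apply₂₂, map_apply, star_sum,
      Finset.sum_add_distrib, star_add, star_mul', star_star]
    simp [mul_comm, add_comm]

/-- A complex number is a right eigenvalue of a quaternionic matrix  iff it is an
eigenvalue of the complex representation . -/
theorem right_eigenvalue_iff_chi {m : ℕ} (P : Matrix (Fin m) (Fin m) Hq) (lam : ℂ) :
    (∃ X : Fin m → Hq, X ≠ 0 ∧ P.mulVec X = fun i => X i * toH lam) ↔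
      (∃ v : Fin m ⊕ Fin m → ℂ, v ≠ 0 ∧ (chi P).mulVec v = lam • v) := by
  refine chiVec.toEquiv.exists_congr fun X => and_congr chiVec.map_ne_zero_iff.symm ?_
  change _ ↔ chi P *ᵥ chiVec X = lam • chiVec X
  rw [chi_mulVec_chiVec, ← chiVec_mul_toH, chiVec.injective.eq_iff]
end
end

section
/- Let P ∈ Sp(1,1), and let X, Y be right eigenvectors of P associated to complex right eigenvalues λ, μ respectively. If λ̄μ ≠ 1 and λμ ≠ 1, then ⟨X, Y⟩ = 0. -/
noncomputable section
open Matrix Polynomial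

def Jmat : Matrix (Fin 2) (Fin 2) Hq := !![1, 0; 0, -1]

/-- `P ∈ Sp(1,1)` iff `Pᴴ J P = J`. -/
def InSp (P : Matrix (Fin 2) (Fin 2) Hq) : Prop := Pᴴ * Jmat * P = Jmat

/-- The signature (1,1) Hermitian form `⟨X, Y⟩ = Xᴴ J Y` on ℍ². -/
def herm (X Y : Fin 2 → Hq) : Hq := star (X 0) * Y 0 - star (X 1) * Y 1

theorem Matrix.star_mulVec_dotProduct_mulVec_mulVec_of_conjTranspose_mul_mul
    {n R : Type*} [Fintype n] [Semiring R] [StarRing R] {P J : Matrix n n R}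
    (hP : Pᴴ * J * P = J) (X Y : n → R) :
    star (P *ᵥ X) ⬝ᵥ (J *ᵥ (P *ᵥ Y)) = star X ⬝ᵥ (J *ᵥ Y) := by
  rw [star_mulVec, ← dotProduct_mulVec, mulVec_mulVec, mulVec_mulVec, hP]

theorem herm_eq_star_dotProduct_mulVec (X Y : Fin 2 → Hq) :
    herm X Y = star X ⬝ᵥ (Jmat *ᵥ Y) := by
  simp [herm, Jmat, dotProduct, mulVec, Fin.sum_univ_two, sub_eq_add_neg]

theorem herm_mulVec_of_inSp {P : Matrix (Fin 2) (Fin 2) Hq} (hP : InSp P) (X Y : Fin 2 → Hq) :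
    herm (P *ᵥ X) (P *ᵥ Y) = herm X Y := by
  simp only [herm_eq_star_dotProduct_mulVec,
    star_mulVec_dotProduct_mulVec_mulVec_of_conjTranspose_mul_mul hP]

theorem herm_mul_right (X Y : Fin 2 → Hq) (a b : Hq) :
    herm (fun i => X i * a) (fun i => Y i * b) = star a * herm X Y * b := by
  simp only [herm, star_mul]
  noncomm_ring

theorem toC1_star_toH_mul_mul_toH (l m : ℂ) (q : Hq) :
    toC1 (star (toH l) * q * toH m) = starRingEnd ℂ l * m * toC1 q := by
  simp only [toC1, Quaternion.re_mul, Quaternion.imI_mul,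
    Quaternion.imJ_mul, Quaternion.imK_mul, Quaternion.re_star, Quaternion.imI_star,
    Quaternion.imJ_star, Quaternion.imK_star, Complex.ext_iff, Complex.mul_re, Complex.mul_im,
    Complex.conj_re, Complex.conj_im]
  simp only [toH]
  constructor <;> ring

theorem toC2_star_toH_mul_mul_toH (l m : ℂ) (q : Hq) :
    toC2 (star (toH l) * q * toH m) = starRingEnd ℂ l * starRingEnd ℂ m * toC2 q := by
  simp only [toC2, Quaternion.re_mul, Quaternion.imI_mul,
    Quaternion.imJ_mul, Quaternion.imK_mul, Quaternion.re_star, Quaternion.imI_star,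
    Quaternion.imJ_star, Quaternion.imK_star, Complex.ext_iff, Complex.mul_re, Complex.mul_im,
    Complex.conj_re, Complex.conj_im]
  simp only [toH]
  constructor <;> ring

theorem eq_zero_of_toC1_eq_zero_of_toC2_eq_zero {q : Hq} (h1 : toC1 q = 0) (h2 : toC2 q = 0) :
    q = 0 := by
  simp only [toC1, toC2, Complex.ext_iff, Complex.zero_re, Complex.zero_im] at h1 h2
  exact QuaternionAlgebra.ext h1.1 h1.2 h2.1 h2.2

/-- Writing `q = z₁ + z₂ j` with `z₁, z₂ ∈ ℂ`, conjugation by complex scalars acts on `z₁` by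
`λ̄μ` and on `z₂` by `λ̄μ̄`, since `j z = z̄ j`. -/
theorem eq_zero_of_eq_star_toH_mul_mul_toH {l m : ℂ} {q : Hq} (h1 : starRingEnd ℂ l * m ≠ 1)
    (h2 : l * m ≠ 1) (hq : star (toH l) * q * toH m = q) : q = 0 := by
  have h2' : starRingEnd ℂ l * starRingEnd ℂ m ≠ 1 := by
    rwa [← map_mul, map_ne_one_iff _ (RingHom.injective _)]
  apply eq_zero_of_toC1_eq_zero_of_toC2_eq_zero
  · have := congrArg toC1 hq
    rw [toC1_star_toH_mul_mul_toH] at this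
    exact (mul_left_eq_self₀.mp this).resolve_left h1
  · have := congrArg toC2 hq
    rw [toC2_star_toH_mul_mul_toH] at this
    exact (mul_left_eq_self₀.mp this).resolve_left h2'

theorem eigenvectors_orthogonal_general (P : Matrix (Fin 2) (Fin 2) Hq) (hP : InSp P)
    (lam mu : ℂ) (X Y : Fin 2 → Hq)
    (heigX : P.mulVec X = fun i => X i * toH lam)
    (heigY : P.mulVec Y = fun i => Y i * toH mu)
    (h1 : starRingEnd ℂ lam * mu ≠ 1) (h2 : lam * mu ≠ 1) :
    herm X Y = 0 := by
  apply eq_zero_of_eq_star_toH_mul_mul_toH h1 h2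
  rw [← herm_mul_right, ← heigX, ← heigY, herm_mulVec_of_inSp hP]

/-- Right eigenvectors of `P ∈ Sp(1,1)` with complex eigenvalues `λ, μ` satisfying
`λ̄μ ≠ 1` and `λμ ≠ 1` are orthogonal. -/
theorem eigenvectors_orthogonal (P : Matrix (Fin 2) (Fin 2) Hq) (hP : InSp P)
    (lam mu : ℂ) (X Y : Fin 2 → Hq) (hX : X ≠ 0) (hY : Y ≠ 0)
    (heigX : P.mulVec X = fun i => X i * toH lam)
    (heigY : P.mulVec Y = fun i => Y i * toH mu)
    (h1 : starRingEnd ℂ lam * mu ≠ 1) (h2 : lam * mu ≠ 1) :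
    herm X Y = 0 :=
  eigenvectors_orthogonal_general P hP lam mu X Y heigX heigY h1 h2
end
end

section
/- For P ∈ Sp(1,1) with substantial right eigenvalues λ₁, λ₂, setting τ = Re(λ₁ + λ₂) and ρ = |λ₁|² + |λ₂|² + 4 Re(λ₁) Re(λ₂), the characteristic polynomial f = t⁴ - 2τt³ + ρt² - 2τt + 1 of χ(P) has a repeated root if and only if (ρ + 4τ + 2)(ρ - 4τ + 2)(ρ - τ² - 2)² = 0. -/
noncomputable section
open Matrix Polynomial

/-- For `P ∈ Sp(1,1)` with substantial right eigenvalues `λ₁, λ₂`, setting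
`τ = Re(λ₁+λ₂)` and `ρ = |λ₁|² + |λ₂|² + 4 Re λ₁ Re λ₂`, the characteristic polynomial
`t⁴ - 2τ t³ + ρ t² - 2τ t + 1` of `chi P` has a repeated root iff
`(ρ+4τ+2)(ρ-4τ+2)(ρ-τ²-2)² = 0`. -/
theorem sp_repeated_root_criterion (P : Matrix (Fin 2) (Fin 2) Hq) (hP : InSp P)
    (l1 l2 : ℂ) (h1 : l1.im = 0 ∨ 0 < l1.im) (h2 : l2.im = 0 ∨ 0 < l2.im)
    (hchar : (chi P).charpoly =
      (X - C l1) * (X - C (starRingEnd ℂ l1)) * (X - C l2) * (X - C (starRingEnd ℂ l2)))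
    (τ ρ : ℝ) (hτ : τ = (l1 + l2).re)
    (hρ : ρ = Complex.normSq l1 + Complex.normSq l2 + 4 * l1.re * l2.re)
    (f : Polynomial ℂ)
    (hf : f = X ^ 4 - C (2 * (τ : ℂ)) * X ^ 3 + C ((ρ : ℂ)) * X ^ 2 -
      C (2 * (τ : ℂ)) * X + 1) :
    (∃ z : ℂ, (X - C z) ^ 2 ∣ f) ↔
      (ρ + 4 * τ + 2) * (ρ - 4 * τ + 2) * (ρ - τ ^ 2 - 2) ^ 2 = 0 := by
  constructor
  · rintro ⟨z, q, hq⟩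
    have hfz : z ^ 4 - 2 * (τ:ℂ) * z ^ 3 + (ρ:ℂ) * z ^ 2 - 2 * (τ:ℂ) * z + 1 = 0 := by
      have h := congrArg (Polynomial.eval z) hq
      simp [hf] at h
      linear_combination h
    have hdz : 4 * z ^ 3 - 6 * (τ:ℂ) * z ^ 2 + 2 * (ρ:ℂ) * z - 2 * (τ:ℂ) = 0 := by
      have h := congrArg (fun p => Polynomial.eval z (derivative p)) hq
      simp [hf, derivative_mul, derivative_pow] at h
      linear_combination h
    have key : (z - 1) * (z + 1) * (z ^ 2 - (τ:ℂ) * z + 1) = 0 := by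
      linear_combination (z / 2) * hdz - hfz
    rcases mul_eq_zero.mp key with h | hquad
    · rcases mul_eq_zero.mp h with h1 | h1
      · -- z = 1
        have hz : z = 1 := by linear_combination h1
        rw [hz] at hfz
        have hc : ((ρ - 4 * τ + 2 : ℝ) : ℂ) = 0 := by push_cast; linear_combination hfz
        have hr : ρ - 4 * τ + 2 = 0 := by exact_mod_cast hc
        rw [show ρ = 4 * τ - 2 by linarith]; ring
      · -- z = -1
        have hz : z = -1 := by linear_combination h1
        rw [hz] at hfz
        have hc : ((ρ + 4 * τ + 2 : ℝ) : ℂ) = 0 := by push_cast; linear_combination hfz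
        have hr : ρ + 4 * τ + 2 = 0 := by exact_mod_cast hc
        rw [show ρ = -(4 * τ) - 2 by linarith]; ring
    · have h5 : ((τ:ℂ) ^ 2 - (ρ:ℂ) + 2) * (1 - (τ:ℂ) * z) = 0 := by
        linear_combination hfz - (z ^ 2 - (τ:ℂ) * z + ((ρ:ℂ) - (τ:ℂ) ^ 2 - 1)) * hquad
      rcases mul_eq_zero.mp h5 with h6 | h6
      · have : ((ρ - τ ^ 2 - 2 : ℝ) : ℂ) = 0 := by push_cast; linear_combination -h6
        have hr : ρ - τ ^ 2 - 2 = 0 := by exact_mod_cast this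
        rw [show ρ = τ ^ 2 + 2 by linarith]; ring
      · exfalso
        have hz2 : z ^ 2 = 0 := by linear_combination hquad - h6
        have : z = 0 := by simpa using hz2
        rw [this, mul_zero] at h6
        norm_num at h6
  · intro hprod
    rcases mul_eq_zero.mp hprod with h | h
    · rcases mul_eq_zero.mp h with h | h
      · -- ρ + 4τ + 2 = 0 : double root at -1
        refine ⟨-1, X ^ 2 + C (-(2 * (τ:ℂ)) - 2) * X + 1, ?_⟩
        have hb : ((ρ:ℝ):ℂ) = -(4 * (τ:ℂ)) - 2 := by
          rw [show ρ = -(4 * τ) - 2 by linarith]; push_cast; ring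
        rw [hf, hb]
        simp only [C_mul, C_add, C_sub, C_neg, C_pow, C_1, map_ofNat]
        ring
      · -- ρ - 4τ + 2 = 0 : double root at 1
        refine ⟨1, X ^ 2 + C (2 - 2 * (τ:ℂ)) * X + 1, ?_⟩
        have hb : ((ρ:ℝ):ℂ) = 4 * (τ:ℂ) - 2 := by
          rw [show ρ = 4 * τ - 2 by linarith]; push_cast; ring
        rw [hf, hb]
        simp only [C_mul, C_add, C_sub, C_neg, C_pow, C_1, map_ofNat]
        ring
    · -- ρ = τ² + 2 : f is a square of a quadratic
      have h' : ρ - τ ^ 2 - 2 = 0 := by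
        have := pow_eq_zero_iff (n := 2) two_ne_zero |>.mp h
        exact this
      have hb : ((ρ:ℝ):ℂ) = (τ:ℂ) ^ 2 + 2 := by
        rw [show ρ = τ ^ 2 + 2 by linarith]; push_cast; ring
      set p : Polynomial ℂ := X ^ 2 - C (τ:ℂ) * X + 1 with hp
      have hdeg : p.degree = 2 := by rw [hp]; compute_degree!
      obtain ⟨z, hz⟩ := Complex.exists_root (by rw [hdeg]; norm_num : 0 < p.degree)
      refine ⟨z, ?_⟩
      have hfp : f = p ^ 2 := by
        rw [hf, hb, hp]
        simp only [C_mul, C_add, C_sub, C_neg, C_pow, C_1, map_ofNat]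
        ring
      rw [hfp]
      exact pow_dvd_pow_of_dvd ((dvd_iff_isRoot).mpr hz) 2
end
end
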